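/- arXiv:2212.08240 — 3 statements merged into one kernel-verified Lean document; each statement's English description precedes it below -/
import Mathlib

section
/- Let σ be a strictly convex polyhedral cone in ℝⁿ (i.e., σ = Cone(x₁,…,x_s) for some x_i ∈ ℝⁿ and {0} is a face of σ). Then there exists a vector v with rational coordinates such that ⟨x, v⟩ ≥ 0 for all x ∈ σ and σ ∩ {x : ⟨x, v⟩ = 0} = {0}. -/
/-!
The nonzero generators lie in `σ \ {0}`, which is convex because `σ` is salient; hence `0` is
not in their (compact) convex hull, and Hahn–Banach gives a real functional that is positive on
every nonzero generator. Positivity on finitely many points is an open condition, so a nearby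
rational functional is positive there as well. Such a functional is nonnegative on `σ`, and it
vanishes at `∑ cᵢ xᵢ` only if every term `cᵢ xᵢ` does.
-/

/-- The smallest convex cone containing `X`. -/
def coneHull {E : Type*} [AddCommGroup E] [Module ℝ E] (X : Set E) : Set E :=
  {y | ∃ (s : ℕ) (c : Fin s → ℝ) (x : Fin s → E),
    (∀ i, 0 ≤ c i) ∧ (∀ i, x i ∈ X) ∧ y = ∑ i, c i • x i}

/-- Standard dot product on `ℝⁿ`. -/
def dotp {n : ℕ} (x v : Fin n → ℝ) : ℝ := ∑ i, x i * v i

section ConeHull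

variable {E : Type*} [AddCommGroup E] [Module ℝ E]

theorem coneHull_eq_hull (X : Set E) : coneHull X = PointedCone.hull ℝ X := by
  ext y
  simp only [coneHull, Set.mem_ofPred_eq, SetLike.mem_coe, Submodule.mem_span_set']
  constructor
  · rintro ⟨s, c, z, hc, hz, rfl⟩
    exact ⟨s, fun i => ⟨c i, hc i⟩, fun i => ⟨z i, hz i⟩, rfl⟩
  · rintro ⟨s, c, z, rfl⟩
    exact ⟨s, fun i => c i, fun i => z i, fun i => (c i).2, fun i => (z i).2, rfl⟩

theorem PointedCone.convex_sdiff_zero {C : PointedCone ℝ E} (hC : (C : ConvexCone ℝ E).Salient) :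
    Convex ℝ ((C : Set E) \ {0}) := by
  intro a ⟨ha, ha0⟩ b ⟨hb, hb0⟩ t u ht hu htu
  refine ⟨C.convex ha hb ht hu htu, fun hzero => ?_⟩
  rw [Set.mem_singleton_iff] at ha0 hb0 hzero
  rcases ht.eq_or_lt with rfl | ht
  · simp_all
  · refine hC _ (C.smul_mem ht.le ha) (smul_ne_zero ht.ne' ha0) ?_
    rw [← eq_neg_of_add_eq_zero_right hzero]
    exact C.smul_mem hu hb

theorem zero_notMem_convexHull_sdiff_zero {X : Set E} (hX : coneHull X ∩ -coneHull X = {0}) :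
    (0 : E) ∉ convexHull ℝ (X \ {0}) := by
  rw [coneHull_eq_hull] at hX
  have hC := (PointedCone.salient_iff_inter_neg_eq_singleton _).2 hX
  intro h0
  exact (convexHull_min (Set.sdiff_subset_sdiff_left PointedCone.subset_hull)
    (PointedCone.convex_sdiff_zero hC) h0).2 rfl

theorem LinearMap.apply_nonneg_of_mem_coneHull {X : Set E} {f : E →ₗ[ℝ] ℝ}
    (hf : ∀ y ∈ X, 0 ≤ f y) {y : E} (hy : y ∈ coneHull X) : 0 ≤ f y := by
  obtain ⟨s, c, z, hc, hz, rfl⟩ := hy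
  simp only [map_sum, map_smul, smul_eq_mul]
  exact Finset.sum_nonneg fun i _ => mul_nonneg (hc i) (hf _ (hz i))

theorem LinearMap.eq_zero_of_mem_coneHull_of_apply_eq_zero {X : Set E} {f : E →ₗ[ℝ] ℝ}
    (hf : ∀ y ∈ X \ {0}, 0 < f y) {y : E} (hy : y ∈ coneHull X) (hfy : f y = 0) : y = 0 := by
  obtain ⟨s, c, z, hc, hz, rfl⟩ := hy
  have hterm_nonneg : ∀ i, 0 ≤ c i * f (z i) := fun i => by
    rcases eq_or_ne (z i) 0 with h | h
    · simp [h]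
    · exact mul_nonneg (hc i) (hf _ ⟨hz i, h⟩).le
  simp only [map_sum, map_smul, smul_eq_mul] at hfy
  have hterm := (Finset.sum_eq_zero_iff_of_nonneg fun i _ => hterm_nonneg i).1 hfy
  refine Finset.sum_eq_zero fun i _ => ?_
  rcases eq_or_ne (z i) 0 with h | h
  · simp [h]
  · have := hterm i (Finset.mem_univ _)
    simp [(mul_eq_zero.1 this).resolve_right (hf _ ⟨hz i, h⟩).ne']

end ConeHull

theorem exists_strongDual_pos_of_zero_notMem_convexHull {E : Type*} [TopologicalSpace E]
    [AddCommGroup E] [Module ℝ E] [IsTopologicalAddGroup E] [ContinuousSMul ℝ E]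
    [LocallyConvexSpace ℝ E] [T2Space E]
    {S : Set E} (hS : S.Finite) (h0 : (0 : E) ∉ convexHull ℝ S) :
    ∃ f : StrongDual ℝ E, ∀ y ∈ S, 0 < f y := by
  obtain ⟨f, u, hf0, hf⟩ := geometric_hahn_banach_point_closed (convex_convexHull ℝ S)
    (hS.isCompact_convexHull ℝ).isClosed h0
  exact ⟨f, fun y hy => (map_zero f ▸ hf0).trans (hf y (subset_convexHull ℝ S hy))⟩

theorem exists_rat_mem_of_isOpen {ι : Type*} {U : Set (ι → ℝ)} (hU : IsOpen U)
    (hne : U.Nonempty) :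
    ∃ q : ι → ℚ, (fun i => (q i : ℝ)) ∈ U :=
  (DenseRange.piMap fun _ => Rat.denseRange_cast (𝕜 := ℝ)).exists_mem_open hU hne

open Matrix in
theorem dotp_eq_dotProductEquiv {n : ℕ} (y v : Fin n → ℝ) :
    dotp y v = dotProductEquiv ℝ (Fin n) v y :=
  dotProduct_comm y v

theorem isOpen_setOf_forall_pos_dotp {n : ℕ} {S : Set (Fin n → ℝ)} (hS : S.Finite) :
    IsOpen {v | ∀ y ∈ S, 0 < dotp y v} := by
  simp only [Set.ofPred_forall]
  exact hS.isOpen_biInter fun y _ => isOpen_lt continuous_const (by unfold dotp; fun_prop)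

/-- A strictly convex polyhedral cone `σ ⊆ ℝⁿ` admits a rational linear
functional `v` which is nonnegative on `σ` and whose kernel meets `σ` only
at the origin. -/
theorem exists_rational_separating_functional
    (n s : ℕ) (x : Fin s → (Fin n → ℝ)) (σ : Set (Fin n → ℝ))
    (hσ : σ = coneHull (Set.range x))
    (hstrict : σ ∩ (-σ) = {0}) :
    ∃ v : Fin n → ℚ,
      (∀ y ∈ σ, 0 ≤ dotp y (fun i => (v i : ℝ))) ∧
      σ ∩ {y | dotp y (fun i => (v i : ℝ)) = 0} = {0} := by
  subst hσ
  have hS : (Set.range x \ {0}).Finite := (Set.finite_range x).sdiff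
  obtain ⟨f, hf⟩ := exists_strongDual_pos_of_zero_notMem_convexHull hS
    (zero_notMem_convexHull_sdiff_zero hstrict)
  obtain ⟨q, hq⟩ := exists_rat_mem_of_isOpen (isOpen_setOf_forall_pos_dotp hS)
    ⟨(dotProductEquiv ℝ (Fin n)).symm f.toLinearMap, fun y hy => by
      simpa [dotp_eq_dotProductEquiv] using hf y hy⟩
  simp only [Set.mem_ofPred_eq, dotp_eq_dotProductEquiv] at hq ⊢
  refine ⟨q, fun y => LinearMap.apply_nonneg_of_mem_coneHull fun y hy => ?_, ?_⟩
  · rcases eq_or_ne y 0 with rfl | h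
    · simp
    · exact (hq y ⟨hy, h⟩).le
  · refine Set.Subset.antisymm
      (fun y ⟨hy, hfy⟩ => LinearMap.eq_zero_of_mem_coneHull_of_apply_eq_zero hq hy hfy) ?_
    rw [Set.singleton_subset_iff, coneHull_eq_hull]
    exact ⟨zero_mem _, map_zero _⟩
end

section
/- Let L and M be two lines in ℝ² not passing through the origin, with squared-distance functions f_L(λ) = c²(1+λ²)/(a+bλ)² and f_M(λ) = c'²(1+λ²)/(a'+b'λ)². If f_L and f_M agree as rational functions of λ (equivalently, all derivatives agree at a single point of their common domain), then M = L or M = −L (i.e., (a',b',c') is a scalar multiple of (a,b,c) or of (−a,−b,c)). -/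
/-! The system says that the vectors `u = c • (a', b')` and `v = c' • (a, b)` have the same
tensor square `u ⊗ u = v ⊗ v`. Over a domain this forces `u = ± v`, so `μ = c' / c` works. -/

theorem eq_and_eq_or_eq_neg_and_eq_neg_of_sq_eq_sq_of_mul_eq_mul {R : Type*} [CommRing R]
    [NoZeroDivisors R] {x y x' y' : R} (hx : x ^ 2 = x' ^ 2) (hxy : x * y = x' * y')
    (hy : y ^ 2 = y' ^ 2) : (x = x' ∧ y = y') ∨ (x = -x' ∧ y = -y') := by
  rcases eq_or_ne x' 0 with hx' | hx'
  · have hx0 : x = 0 := by simpa [hx'] using hx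
    rcases sq_eq_sq_iff_eq_or_eq_neg.mp hy with hy | hy
    · exact .inl ⟨hx0.trans hx'.symm, hy⟩
    · exact .inr ⟨by rw [hx0, hx', neg_zero], hy⟩
  · rcases sq_eq_sq_iff_eq_or_eq_neg.mp hx with hx | hx
    · refine .inl ⟨hx, mul_left_cancel₀ hx' ?_⟩
      rwa [hx] at hxy
    · refine .inr ⟨hx, mul_left_cancel₀ hx' ?_⟩
      rw [hx] at hxy
      linear_combination -hxy

theorem line_determined_by_distance_function_general
    (a b c a' b' c' : ℝ)
    (hc : c ≠ 0)
    (h1 : c ^ 2 * a' ^ 2 = c' ^ 2 * a ^ 2)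
    (h2 : c ^ 2 * (a' * b') = c' ^ 2 * (a * b))
    (h3 : c ^ 2 * b' ^ 2 = c' ^ 2 * b ^ 2) :
    ∃ μ : ℝ, (a', b', c') = (μ * a, μ * b, μ * c) ∨
      (a', b', c') = (μ * (-a), μ * (-b), μ * c) := by
  have scale {p q : ℝ} (h : c * p = c' * q) : p = c' / c * q := by
    field_simp
    linear_combination h
  refine ⟨c' / c, ?_⟩
  rcases eq_and_eq_or_eq_neg_and_eq_neg_of_sq_eq_sq_of_mul_eq_mul (x := c * a') (y := c * b')
    (x' := c' * a) (y' := c' * b) (by linear_combination h1) (by linear_combination h2)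
    (by linear_combination h3) with ⟨ha, hb⟩ | ⟨ha, hb⟩
  · left
    rw [scale ha, scale hb, div_mul_cancel₀ c' hc]
  · right
    rw [scale (ha.trans (mul_neg c' a).symm), scale (hb.trans (mul_neg c' b).symm),
      div_mul_cancel₀ c' hc]

/-- If the squared-distance functions of two lines `L : ax+by=c` and
`M : a'x+b'y=c'`, neither through the origin, agree as rational functions
(equivalently, the polynomial system below holds), then `M = L` or `M = −L`:
`(a',b',c')` is a scalar multiple of `(a,b,c)` or of `(−a,−b,c)`. -/
theorem line_determined_by_distance_function
    (a b c a' b' c' : ℝ)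
    (hab : (a, b) ≠ (0, 0)) (hab' : (a', b') ≠ (0, 0))
    (hc : c ≠ 0) (hc' : c' ≠ 0)
    (h1 : c ^ 2 * a' ^ 2 = c' ^ 2 * a ^ 2)
    (h2 : c ^ 2 * (a' * b') = c' ^ 2 * (a * b))
    (h3 : c ^ 2 * b' ^ 2 = c' ^ 2 * b ^ 2) :
    ∃ μ : ℝ, (a', b', c') = (μ * a, μ * b, μ * c) ∨
      (a', b', c') = (μ * (-a), μ * (-b), μ * c) :=
  line_determined_by_distance_function_general a b c a' b' c' hc h1 h2 h3
end

section
/- Consider the fan Σ in ℝ⁴ with rays generated by u₁=(−2,−1,0,1), u₂=(2,−1,0,1), u₃=(0,−2,−1,1), u₄=(0,2,−1,1), u₅=(−1,0,−2,1), u₆=(−1,0,2,1), u₇=(0,0,0,−1), and maximal cones spanned by the index sets {1,2,3,7}, {1,2,6,7}, {3,4,2,7}, {3,4,5,7}, {5,6,1,7}, {5,6,4,7}, {1,3,5,7}, {2,4,6,7}. Then the vector (0,0,0,1) is not contained in any cone of Σ; in particular Σ is not complete. -/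
section ConeHull

variable {E : Type*} [AddCommGroup E] [Module ℝ E]

theorem map_nonpos_of_mem_coneHull (f : E →ₗ[ℝ] ℝ) {X : Set E} (hX : ∀ x ∈ X, f x ≤ 0)
    {y : E} (hy : y ∈ coneHull X) : f y ≤ 0 := by
  obtain ⟨s, c, x, hc, hx, rfl⟩ := hy
  rw [map_sum]
  refine Finset.sum_nonpos fun i _ => ?_
  rw [map_smul, smul_eq_mul]
  exact mul_nonpos_of_nonneg_of_nonpos (hc i) (hX _ (hx i))

theorem notMem_coneHull_of_map_pos (f : E →ₗ[ℝ] ℝ) {X : Set E} (hX : ∀ x ∈ X, f x ≤ 0)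
    {y : E} (hy : 0 < f y) : y ∉ coneHull X :=
  fun h => (map_nonpos_of_mem_coneHull f hX h).not_gt hy

end ConeHull

theorem notMem_coneHull_of_dotProduct_pos {n : Type*} [Fintype n] (w : n → ℝ)
    {X : Set (n → ℝ)} (hX : ∀ x ∈ X, w ⬝ᵥ x ≤ 0) {y : n → ℝ} (hy : 0 < w ⬝ᵥ y) :
    y ∉ coneHull X :=
  notMem_coneHull_of_map_pos (dotProductBilin ℝ ℝ w) hX hy

/-- For the fan in `ℝ⁴` with rays `u₁,…,u₇` and the eight listed maximal
cones, the vector `(0,0,0,1)` lies in none of the maximal cones (hence in no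
cone of the fan), and in particular the fan is not complete. -/
theorem example_maximal_noncomplete_fan
    (u : Fin 7 → (Fin 4 → ℝ))
    (hu : u = ![![-2, -1, 0, 1], ![2, -1, 0, 1], ![0, -2, -1, 1], ![0, 2, -1, 1],
      ![-1, 0, -2, 1], ![-1, 0, 2, 1], ![0, 0, 0, -1]])
    (cones : Fin 8 → Set (Fin 4 → ℝ))
    (hcones : cones = ![
      coneHull {u 0, u 1, u 2, u 6},
      coneHull {u 0, u 1, u 5, u 6},
      coneHull {u 2, u 3, u 1, u 6},
      coneHull {u 2, u 3, u 4, u 6},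
      coneHull {u 4, u 5, u 0, u 6},
      coneHull {u 4, u 5, u 3, u 6},
      coneHull {u 0, u 2, u 4, u 6},
      coneHull {u 1, u 3, u 5, u 6}]) :
    (∀ a : Fin 8, (![0, 0, 0, 1] : Fin 4 → ℝ) ∉ cones a) ∧
    (⋃ a : Fin 8, cones a) ≠ Set.univ := by
  have notMem : ∀ a, (![0, 0, 0, 1] : Fin 4 → ℝ) ∉ cones a := by
    intro a
    rw [hcones]
    fin_cases a <;>
      [apply notMem_coneHull_of_dotProduct_pos ![0, 1, 0, 1];
       apply notMem_coneHull_of_dotProduct_pos ![0, 2, -1, 2];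
       apply notMem_coneHull_of_dotProduct_pos ![-1, 0, 2, 2];
       apply notMem_coneHull_of_dotProduct_pos ![0, 0, 1, 1];
       apply notMem_coneHull_of_dotProduct_pos ![1, 0, 0, 1];
       apply notMem_coneHull_of_dotProduct_pos ![2, -1, 0, 2];
       apply notMem_coneHull_of_dotProduct_pos ![1, 1, 1, 3];
       apply notMem_coneHull_of_dotProduct_pos ![-1, -1, -1, 1]] <;>
      simp [hu, dotProduct, Fin.sum_univ_four] <;> norm_num
  refine ⟨notMem, fun hcover => ?_⟩
  obtain ⟨a, ha⟩ := Set.iUnion_eq_univ_iff.mp hcover ![0, 0, 0, 1]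
  exact notMem a ha
end
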